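/- Let p > 1, ν ∈ ℝ, T̂ ∈ (0,∞], T ∈ (0,∞]. Let μ₁, μ₃ : [0,T̂) → ℝ be continuous; let α, b : [0,T̂) → ℝ be continuously differentiable with α(0)=1, b(0)=0, α' = α·μ₁, b' = α^{p−1}·μ₃, and α > 0 on [0,T̂); let ρ : [0,T̂) → [0,T) be continuously differentiable with ρ(0)=0 and ρ'(τ) = α(τ)^{2p−2}. Let u : ℝ × [0,T) → ℝ have continuous partial derivatives u_x, u_{xx}, u_t (jointly continuous, u continuously differentiable in (x,t)), and suppose u satisfies u_t(x,t) = ν·u_{xx}(x,t) − |u(x,t)|^{p−1}·sgn(u(x,t))·u_x(x,t) for all x ∈ ℝ, t ∈ (0,T). Then the function v(ξ,τ) = α(τ)·u(α(τ)^{p−1}·ξ + b(τ), ρ(τ)) satisfies the co-moving equation v_τ(ξ,τ) = ν·v_{ξξ}(ξ,τ) − |v(ξ,τ)|^{p−1}·sgn(v(ξ,τ))·v_ξ(ξ,τ) + μ₁(τ)·(v(ξ,τ) + (p−1)·ξ·v_ξ(ξ,τ)) + μ₃(τ)·v_ξ(ξ,τ) for all ξ ∈ ℝ and τ ∈ (0,T̂).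 -/

import Mathlib

/-- The half-open time interval `[0, T)`, where `T ∈ (0, ∞]` is an extended real. -/
def tIval (T : EReal) : Set ℝ := {t : ℝ | 0 ≤ t ∧ (t : EReal) < T}

/-- The solution in co-moving coordinates obtained from the original solution `u`:
`v(ξ,τ) = α(τ) u(α(τ)^(p−1) ξ + b(τ), ρ(τ))`. -/
noncomputable def comovV (p : ℝ) (α b ρ : ℝ → ℝ) (u : ℝ → ℝ → ℝ) (ξ τ : ℝ) : ℝ :=
  α τ * u (α τ ^ (p - 1) * ξ + b τ) (ρ τ)

/-!
The time derivative of `v` is the chain rule for `u` along the curve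
`s ↦ (α(s)^(p-1) ξ + b(s), ρ(s))`, which is legitimate because `u` has continuous partial
derivatives and hence is jointly differentiable at interior points; `ρ(τ) > 0` because `ρ` is
strictly increasing from `ρ(0) = 0`. The spatial derivatives of `v` are `α^p u_x` and
`α^(2p-1) u_xx`. After substituting the equation for `u_t`, the factor `ρ' = α^(2p-2)` turns
`α ρ' (ν u_xx - |u|^(p-1) sgn(u) u_x)` into `ν v_ξξ - |v|^(p-1) sgn(v) v_ξ`, since the
nonlinearity is positively homogeneous of degree `p - 1`; the terms from `α' = α μ₁` and
`b' = α^(p-1) μ₃` are the `μ₁` and `μ₃` terms of the co-moving equation.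
-/

open Filter Topology Set

theorem hasDerivAt_comp_of_continuous_partials {𝕜 F : Type*} [NontriviallyNormedField 𝕜]
    [IsRCLikeNormedField 𝕜] [NormedAddCommGroup F] [NormedSpace 𝕜 F]
    {f f₁ f₂ : 𝕜 → 𝕜 → F} {x y : 𝕜 → 𝕜} {x' y' s : 𝕜}
    (df₁ : ∀ᶠ q in 𝓝 (x s, y s), HasDerivAt (f · q.2) (f₁ q.1 q.2) q.1)
    (df₂ : ∀ᶠ q in 𝓝 (x s, y s), HasDerivAt (f q.1 ·) (f₂ q.1 q.2) q.2)
    (cf₁ : ContinuousAt ↿f₁ (x s, y s)) (cf₂ : ContinuousAt ↿f₂ (x s, y s))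
    (hx : HasDerivAt x x' s) (hy : HasDerivAt y y' s) :
    HasDerivAt (fun s => f (x s) (y s)) (x' • f₁ (x s) (y s) + y' • f₂ (x s) (y s)) s := by
  have hsingleton : Continuous (ContinuousLinearMap.toSpanSingleton 𝕜 : F → 𝕜 →L[𝕜] F) :=
    (ContinuousLinearMap.smulRightL 𝕜 𝕜 F 1).continuous
  have hf := hasStrictFDerivAt_uncurry_coprod
    (f₁ := fun a b => ContinuousLinearMap.toSpanSingleton 𝕜 (f₁ a b))
    (f₂ := fun a b => ContinuousLinearMap.toSpanSingleton 𝕜 (f₂ a b))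
    (df₁.mono fun q hq => hq.hasFDerivAt) (df₂.mono fun q hq => hq.hasFDerivAt)
    (hsingleton.continuousAt.comp cf₁) (hsingleton.continuousAt.comp cf₂)
  simpa [Function.HasUncurry.uncurry, Function.comp_def] using
    hf.hasFDerivAt.comp_hasDerivAt s (hx.prodMk hy)

theorem lt_of_hasDerivWithinAt_pos {f f' : ℝ → ℝ} {s : Set ℝ} {a b : ℝ} (hab : a < b)
    (hs : Icc a b ⊆ s) (hf : ∀ x ∈ s, HasDerivWithinAt f (f' x) s x)
    (hf' : ∀ x ∈ s, 0 < f' x) : f a < f b := by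
  have hint : interior (Icc a b) ⊆ s := interior_subset.trans hs
  refine strictMonoOn_of_hasDerivWithinAt_pos (convex_Icc a b)
    (fun x hx => (hf x (hs hx)).continuousWithinAt.mono hs)
    (fun x hx => (hf x (hint hx)).mono hint) (fun x hx => hf' x (hint hx))
    (left_mem_Icc.2 hab.le) (right_mem_Icc.2 hab.le) hab

theorem hasDerivAt_rpow_const_of_hasDerivAt_mul {α : ℝ → ℝ} {m τ : ℝ} (q : ℝ)
    (hα : HasDerivAt α (α τ * m) τ) (hpos : 0 < α τ) :
    HasDerivAt (fun s => α s ^ q) (q * m * α τ ^ q) τ := by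
  convert hα.rpow_const (p := q) (Or.inl hpos.ne') using 1
  rw [Real.rpow_sub_one hpos.ne']
  field_simp

theorem hasDerivAt_mul_comp_affine {g : ℝ → ℝ} {g' : ℝ} (c a β ξ : ℝ)
    (hg : HasDerivAt g g' (a * ξ + β)) :
    HasDerivAt (fun y => c * g (a * y + β)) (c * a * g') ξ := by
  have hlin : HasDerivAt (fun y => a * y + β) a ξ := by
    simpa using ((hasDerivAt_id ξ).const_mul a).add_const β
  simpa [mul_assoc, mul_comm a] using (hg.comp ξ hlin).const_mul c

theorem Real.sign_mul_of_pos {a x : ℝ} (ha : 0 < a) : Real.sign (a * x) = Real.sign x := by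
  rcases lt_trichotomy x 0 with hx | rfl | hx
  · rw [Real.sign_of_neg (mul_neg_of_pos_of_neg ha hx), Real.sign_of_neg hx]
  · rw [mul_zero]
  · rw [Real.sign_of_pos (mul_pos ha hx), Real.sign_of_pos hx]

theorem abs_mul_rpow_mul_sign_of_pos {a : ℝ} (q x : ℝ) (ha : 0 < a) :
    |a * x| ^ q * Real.sign (a * x) = a ^ q * (|x| ^ q * Real.sign x) := by
  rw [Real.sign_mul_of_pos ha, abs_mul, abs_of_pos ha, Real.mul_rpow ha.le (abs_nonneg x),
    mul_assoc]

section tIval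

variable {T : EReal} {t : ℝ}

theorem tIval_mem_nhds (h0 : 0 < t) (hT : (t : EReal) < T) : tIval T ∈ 𝓝 t := by
  have hopen : IsOpen (Ioi (0 : ℝ) ∩ (fun x : ℝ => (x : EReal)) ⁻¹' Iio T) :=
    isOpen_Ioi.inter (isOpen_Iio.preimage continuous_coe_real_ereal)
  exact mem_of_superset (hopen.mem_nhds ⟨h0, hT⟩) fun _ hs => ⟨le_of_lt hs.1, hs.2⟩

theorem Icc_zero_subset_tIval (ht : t ∈ tIval T) : Icc 0 t ⊆ tIval T :=
  fun _ hs => ⟨hs.1, lt_of_le_of_lt (EReal.coe_le_coe_iff.2 hs.2) ht.2⟩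

end tIval

theorem hasDerivAt_comp_of_tIval_partials {T : EReal} {u ux ut : ℝ → ℝ → ℝ} {x y : ℝ → ℝ}
    {x' y' s : ℝ}
    (hux : ∀ (x : ℝ), ∀ t ∈ tIval T, HasDerivAt (fun x' => u x' t) (ux x t) x)
    (hut : ∀ (x : ℝ), ∀ t ∈ tIval T,
      HasDerivWithinAt (fun t' => u x t') (ut x t) (tIval T) t)
    (huxcont : ContinuousOn (fun q : ℝ × ℝ => ux q.1 q.2) (univ ×ˢ tIval T))
    (hutcont : ContinuousOn (fun q : ℝ × ℝ => ut q.1 q.2) (univ ×ˢ tIval T))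
    (h0 : 0 < y s) (hT : (y s : EReal) < T) (hx : HasDerivAt x x' s) (hy : HasDerivAt y y' s) :
    HasDerivAt (fun s => u (x s) (y s)) (x' * ux (x s) (y s) + y' * ut (x s) (y s)) s := by
  have hnhds : univ ×ˢ tIval T ∈ 𝓝 (x s, y s) := prod_mem_nhds univ_mem (tIval_mem_nhds h0 hT)
  have hinterior : ∀ᶠ q : ℝ × ℝ in 𝓝 (x s, y s), tIval T ∈ 𝓝 q.2 :=
    (continuous_snd.tendsto _).eventually (eventually_mem_nhds_iff.2 (tIval_mem_nhds h0 hT))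
  exact hasDerivAt_comp_of_continuous_partials
    (hinterior.mono fun q hq => hux q.1 q.2 (mem_of_mem_nhds hq))
    (hinterior.mono fun q hq => (hut q.1 q.2 (mem_of_mem_nhds hq)).hasDerivAt hq)
    (huxcont.continuousAt hnhds) (hutcont.continuousAt hnhds) hx hy

section comovV

variable {p : ℝ} {α b ρ : ℝ → ℝ} {u ux uxx : ℝ → ℝ → ℝ} {τ : ℝ}

theorem hasDerivAt_comovV_space (hux : ∀ x, HasDerivAt (fun x' => u x' (ρ τ)) (ux x (ρ τ)) x)
    (ξ : ℝ) :
    HasDerivAt (fun y => comovV p α b ρ u y τ)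
      (α τ * α τ ^ (p - 1) * ux (α τ ^ (p - 1) * ξ + b τ) (ρ τ)) ξ :=
  hasDerivAt_mul_comp_affine _ _ _ ξ (hux _)

theorem hasDerivAt_deriv_comovV_space
    (hux : ∀ x, HasDerivAt (fun x' => u x' (ρ τ)) (ux x (ρ τ)) x)
    (huxx : ∀ x, HasDerivAt (fun x' => ux x' (ρ τ)) (uxx x (ρ τ)) x) (ξ : ℝ) :
    HasDerivAt (fun y => deriv (fun y' => comovV p α b ρ u y' τ) y)
      (α τ * α τ ^ (p - 1) * α τ ^ (p - 1) * uxx (α τ ^ (p - 1) * ξ + b τ) (ρ τ)) ξ := by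
  rw [funext fun y => (hasDerivAt_comovV_space (p := p) (α := α) (b := b) hux y).deriv]
  exact hasDerivAt_mul_comp_affine _ _ _ ξ (huxx _)

end comovV

theorem stmt_17_general (p ν : ℝ) (That T : EReal)
    (μ₁ μ₃ : ℝ → ℝ)
    (α b : ℝ → ℝ)
    (hαpos : ∀ τ ∈ tIval That, 0 < α τ)
    (hα' : ∀ τ ∈ tIval That, HasDerivWithinAt α (α τ * μ₁ τ) (tIval That) τ)
    (hb' : ∀ τ ∈ tIval That,
      HasDerivWithinAt b (α τ ^ (p - 1) * μ₃ τ) (tIval That) τ)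
    (ρ : ℝ → ℝ) (hρ0 : ρ 0 = 0) (hρmem : ∀ τ ∈ tIval That, ρ τ ∈ tIval T)
    (hρ' : ∀ τ ∈ tIval That,
      HasDerivWithinAt ρ (α τ ^ (2 * p - 2)) (tIval That) τ)
    (u ux uxx ut : ℝ → ℝ → ℝ)
    (hux : ∀ (x : ℝ), ∀ t ∈ tIval T, HasDerivAt (fun x' => u x' t) (ux x t) x)
    (huxx : ∀ (x : ℝ), ∀ t ∈ tIval T, HasDerivAt (fun x' => ux x' t) (uxx x t) x)
    (hut : ∀ (x : ℝ), ∀ t ∈ tIval T,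
      HasDerivWithinAt (fun t' => u x t') (ut x t) (tIval T) t)
    (huxcont : ContinuousOn (fun q : ℝ × ℝ => ux q.1 q.2) (Set.univ ×ˢ tIval T))
    (hutcont : ContinuousOn (fun q : ℝ × ℝ => ut q.1 q.2) (Set.univ ×ˢ tIval T))
    (hpde : ∀ (x t : ℝ), 0 < t → (t : EReal) < T →
      ut x t = ν * uxx x t - |u x t| ^ (p - 1) * Real.sign (u x t) * ux x t) :
    ∀ (ξ τ : ℝ), 0 < τ → (τ : EReal) < That →
      deriv (fun s => comovV p α b ρ u ξ s) τ =
        ν * deriv (fun y => deriv (fun y' => comovV p α b ρ u y' τ) y) ξ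
          - |comovV p α b ρ u ξ τ| ^ (p - 1) * Real.sign (comovV p α b ρ u ξ τ)
            * deriv (fun y => comovV p α b ρ u y τ) ξ
          + μ₁ τ * (comovV p α b ρ u ξ τ
            + (p - 1) * ξ * deriv (fun y => comovV p α b ρ u y τ) ξ)
          + μ₃ τ * deriv (fun y => comovV p α b ρ u y τ) ξ := by
  intro ξ τ hτ hτThat
  have hτmem : τ ∈ tIval That := ⟨hτ.le, hτThat⟩
  have hnhds := tIval_mem_nhds hτ hτThat
  have hA : 0 < α τ := hαpos τ hτmem
  have hα := (hα' τ hτmem).hasDerivAt hnhds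
  have hρ := (hρ' τ hτmem).hasDerivAt hnhds
  have hρpos : 0 < ρ τ := hρ0 ▸ lt_of_hasDerivWithinAt_pos hτ (Icc_zero_subset_tIval hτmem) hρ'
    fun s hs => Real.rpow_pos_of_pos (hαpos s hs) _
  have hρT : ρ τ ∈ tIval T := hρmem τ hτmem
  have hX : HasDerivAt (fun s => α s ^ (p - 1) * ξ + b s)
      (α τ ^ (p - 1) * ((p - 1) * μ₁ τ * ξ + μ₃ τ)) τ := by
    refine (((hasDerivAt_rpow_const_of_hasDerivAt_mul (p - 1) hα hA).mul_const ξ).add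
      ((hb' τ hτmem).hasDerivAt hnhds)).congr_deriv ?_
    ring
  have hv : HasDerivAt (fun s => comovV p α b ρ u ξ s) _ τ :=
    hα.mul (hasDerivAt_comp_of_tIval_partials hux hut huxcont hutcont hρpos hρT.2 hX hρ)
  rw [hv.deriv, (hasDerivAt_deriv_comovV_space (hux · _ hρT) (huxx · _ hρT) ξ).deriv,
    (hasDerivAt_comovV_space (hux · _ hρT) ξ).deriv, comovV, abs_mul_rpow_mul_sign_of_pos _ _ hA,
    hpde _ _ hρpos hρT.2, show 2 * p - 2 = (p - 1) + (p - 1) by ring, Real.rpow_add hA]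
  ring

/-- (Freezing method, forward direction.) If `u` solves the
generalized Burgers' equation `u_t = ν u_xx − |u|^(p−1) sgn(u) u_x` and
`α, b, ρ` solve `α' = αμ₁`, `b' = α^(p−1)μ₃`, `ρ' = α^(2p−2)` with
`α(0)=1`, `b(0)=0`, `ρ(0)=0`, then `v(ξ,τ) = α(τ) u(α(τ)^(p−1)ξ + b(τ), ρ(τ))`
solves the co-moving equation
`v_τ = ν v_ξξ − |v|^(p−1) sgn(v) v_ξ + μ₁(v + (p−1)ξ v_ξ) + μ₃ v_ξ`. -/
theorem stmt_17 (p ν : ℝ) (hp : 1 < p) (That T : EReal)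
    (hThat : 0 < That) (hT : 0 < T)
    (μ₁ μ₃ : ℝ → ℝ)
    (hμ₁ : ContinuousOn μ₁ (tIval That)) (hμ₃ : ContinuousOn μ₃ (tIval That))
    (α b : ℝ → ℝ) (hα0 : α 0 = 1) (hb0 : b 0 = 0)
    (hαpos : ∀ τ ∈ tIval That, 0 < α τ)
    (hα' : ∀ τ ∈ tIval That, HasDerivWithinAt α (α τ * μ₁ τ) (tIval That) τ)
    (hb' : ∀ τ ∈ tIval That,
      HasDerivWithinAt b (α τ ^ (p - 1) * μ₃ τ) (tIval That) τ)
    (ρ : ℝ → ℝ) (hρ0 : ρ 0 = 0) (hρmem : ∀ τ ∈ tIval That, ρ τ ∈ tIval T)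
    (hρ' : ∀ τ ∈ tIval That,
      HasDerivWithinAt ρ (α τ ^ (2 * p - 2)) (tIval That) τ)
    (u ux uxx ut : ℝ → ℝ → ℝ)
    (hux : ∀ (x : ℝ), ∀ t ∈ tIval T, HasDerivAt (fun x' => u x' t) (ux x t) x)
    (huxx : ∀ (x : ℝ), ∀ t ∈ tIval T, HasDerivAt (fun x' => ux x' t) (uxx x t) x)
    (hut : ∀ (x : ℝ), ∀ t ∈ tIval T,
      HasDerivWithinAt (fun t' => u x t') (ut x t) (tIval T) t)
    (hucont : ContinuousOn (fun q : ℝ × ℝ => u q.1 q.2) (Set.univ ×ˢ tIval T))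
    (huxcont : ContinuousOn (fun q : ℝ × ℝ => ux q.1 q.2) (Set.univ ×ˢ tIval T))
    (huxxcont : ContinuousOn (fun q : ℝ × ℝ => uxx q.1 q.2) (Set.univ ×ˢ tIval T))
    (hutcont : ContinuousOn (fun q : ℝ × ℝ => ut q.1 q.2) (Set.univ ×ˢ tIval T))
    (hpde : ∀ (x t : ℝ), 0 < t → (t : EReal) < T →
      ut x t = ν * uxx x t - |u x t| ^ (p - 1) * Real.sign (u x t) * ux x t) :
    ∀ (ξ τ : ℝ), 0 < τ → (τ : EReal) < That →
      deriv (fun s => comovV p α b ρ u ξ s) τ =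
        ν * deriv (fun y => deriv (fun y' => comovV p α b ρ u y' τ) y) ξ
          - |comovV p α b ρ u ξ τ| ^ (p - 1) * Real.sign (comovV p α b ρ u ξ τ)
            * deriv (fun y => comovV p α b ρ u y τ) ξ
          + μ₁ τ * (comovV p α b ρ u ξ τ
            + (p - 1) * ξ * deriv (fun y => comovV p α b ρ u y τ) ξ)
          + μ₃ τ * deriv (fun y => comovV p α b ρ u y τ) ξ :=
  stmt_17_general p ν That T μ₁ μ₃ α b hαpos hα' hb' ρ hρ0 hρmem hρ' u ux uxx ut hux huxx hut
    huxcont hutcont hpde
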